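/- Tensors of alignment type III have vanishing scalar polynomial invariants (the VSI property): let T₁,…,T_k be tensors on ℝ⁴ (of ranks r₁,…,r_k) such that, relative to a common null frame, every component of nonnegative boost weight of each T_m vanishes. Then every full contraction of (T₁,…,T_k), for every perfect pairing p of the combined index slots, equals zero. In particular, all scalar polynomial invariants constructed from a type III torsion tensor and its (type III) covariant derivatives vanish. -/

import Mathlib

/-!
A nonzero term of the contraction sum needs every metric factor `η(f i, f (p i))` to be nonzero,
which forces the paired indices to carry opposite boost weights, so the total boost weight of the
index assignment `f` is zero. It also needs every component `T m (f|slots of m)` to be nonzero,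
which for type III tensors forces each of the `k ≥ 1` components to have negative boost weight,
so the total is negative. Hence every term vanishes.
-/

noncomputable def eta : Fin 4 → Fin 4 → ℝ := fun a b =>
  if (a = 0 ∧ b = 1) ∨ (a = 1 ∧ b = 0) then -1
  else if (a = 2 ∧ b = 2) ∨ (a = 3 ∧ b = 3) then 1 else 0

def bw {r : ℕ} (a : Fin r → Fin 4) : ℤ :=
  ((Finset.univ.filter fun i => a i = 0).card : ℤ) -
    ((Finset.univ.filter fun i => a i = 1).card : ℤ)

abbrev Slots {k : ℕ} (r : Fin k → ℕ) : Type := (m : Fin k) × Fin (r m)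

noncomputable def contraction {k : ℕ} (r : Fin k → ℕ) (T : ∀ m, (Fin (r m) → Fin 4) → ℝ)
    (p : Slots r → Slots r) (S : Finset (Slots r)) : ℝ :=
  ∑ f : Slots r → Fin 4,
    (∏ i ∈ S, eta (f i) (f (p i))) * ∏ m, T m (fun j => f ⟨m, j⟩)

open Finset

def indexBoostWeight : Fin 4 → ℤ := fun a => if a = 0 then 1 else if a = 1 then -1 else 0

lemma indexBoostWeight_add_eq_zero_of_eta_ne_zero {a b : Fin 4} (h : eta a b ≠ 0) :
    indexBoostWeight a + indexBoostWeight b = 0 := by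
  fin_cases a <;> fin_cases b <;> simp_all [eta, indexBoostWeight]

lemma bw_eq_sum_indexBoostWeight {r : ℕ} (a : Fin r → Fin 4) :
    bw a = ∑ i, indexBoostWeight (a i) := by
  simp only [bw, card_filter, Nat.cast_sum, ← sum_sub_distrib]
  refine sum_congr rfl fun i _ => ?_
  generalize a i = x
  fin_cases x <;> rfl

lemma Finset.sum_univ_eq_sum_add_involutive {ι M : Type*} [Fintype ι] [DecidableEq ι]
    [AddCommMonoid M] {p : ι → ι} (hp : Function.Involutive p) {S : Finset ι}
    (hS : ∀ i, i ∈ S ↔ p i ∉ S) (g : ι → M) :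
    ∑ i, g i = ∑ i ∈ S, (g i + g (p i)) := by
  have hcompl : ∑ i ∈ Sᶜ, g i = ∑ i ∈ S, g (p i) :=
    sum_nbij' p p (fun i hi => (hS (p i)).2 (by simpa [hp i] using hi))
      (fun i hi => by simpa using (hS i).1 hi) (fun i _ => hp i) (fun i _ => hp i)
      (fun i _ => by rw [hp i])
  rw [sum_add_distrib, ← hcompl, sum_add_sum_compl]

lemma sum_indexBoostWeight_eq_zero_of_prod_eta_ne_zero {ι : Type*} [Fintype ι] [DecidableEq ι]
    {p : ι → ι} (hp : Function.Involutive p) {S : Finset ι} (hS : ∀ i, i ∈ S ↔ p i ∉ S)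
    {f : ι → Fin 4} (hη : ∏ i ∈ S, eta (f i) (f (p i)) ≠ 0) :
    ∑ i, indexBoostWeight (f i) = 0 := by
  rw [sum_univ_eq_sum_add_involutive hp hS]
  exact sum_eq_zero fun i hi =>
    indexBoostWeight_add_eq_zero_of_eta_ne_zero (prod_ne_zero_iff.1 hη i hi)

lemma sum_indexBoostWeight_slots {k : ℕ} (r : Fin k → ℕ) (f : Slots r → Fin 4) :
    ∑ i, indexBoostWeight (f i) = ∑ m, bw (fun j => f ⟨m, j⟩) := by
  simp only [bw_eq_sum_indexBoostWeight, ← univ_sigma_univ, sum_sigma]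

lemma sum_indexBoostWeight_neg_of_prod_ne_zero {k : ℕ} (hk : 0 < k) {r : Fin k → ℕ}
    {T : ∀ m, (Fin (r m) → Fin 4) → ℝ} (hIII : ∀ m a, 0 ≤ bw a → T m a = 0)
    {f : Slots r → Fin 4} (hT : ∏ m, T m (fun j => f ⟨m, j⟩) ≠ 0) :
    ∑ i, indexBoostWeight (f i) < 0 := by
  have hneg : ∀ m, bw (fun j => f ⟨m, j⟩) < 0 := fun m =>
    not_le.1 fun h => prod_ne_zero_iff.1 hT m (mem_univ m) (hIII m _ h)
  rw [sum_indexBoostWeight_slots]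
  exact sum_neg (fun m _ => hneg m) (univ_nonempty_iff.2 ⟨⟨0, hk⟩⟩)

theorem contraction_typeIII_vanishes_general
    {k : ℕ} (hk : 0 < k) (r : Fin k → ℕ) (T : ∀ m, (Fin (r m) → Fin 4) → ℝ)
    (hIII : ∀ m a, 0 ≤ bw a → T m a = 0)
    (p : Slots r → Slots r) (S : Finset (Slots r))
    (hp : p ∘ p = id) (hS : ∀ i, i ∈ S ↔ p i ∉ S) :
    contraction r T p S = 0 := by
  refine sum_eq_zero fun f _ => ?_
  by_contra h
  obtain ⟨hη, hT⟩ := mul_ne_zero_iff.1 h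
  have hzero := sum_indexBoostWeight_eq_zero_of_prod_eta_ne_zero (p := p) (congrFun hp) hS hη
  have hneg := sum_indexBoostWeight_neg_of_prod_ne_zero hk hIII hT
  omega

/-- tensors of alignment type III have vanishing scalar polynomial invariants: if
every component of nonnegative boost weight of each of the tensors `T₁,…,T_k` (`k ≥ 1`) vanishes,
then every full contraction of them vanishes. -/
theorem contraction_typeIII_vanishes
    {k : ℕ} (hk : 0 < k) (r : Fin k → ℕ) (T : ∀ m, (Fin (r m) → Fin 4) → ℝ)
    (hIII : ∀ m a, 0 ≤ bw a → T m a = 0)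
    (p : Slots r → Slots r) (S : Finset (Slots r))
    (hp : p ∘ p = id) (hfp : ∀ i, p i ≠ i) (hS : ∀ i, i ∈ S ↔ p i ∉ S) :
    contraction r T p S = 0 :=
  contraction_typeIII_vanishes_general hk r T hIII p S hp hS
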